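/- If Δt·α/h ≤ 1/(√2 · Σ_{m=1}^M |c_m|), then for all real wavenumbers k_x, k_z, (Δt·α/h)²·(X² + Z²) ≤ 1, where X = Σ c_m sin((m−0.5)k_x h) and Z = Σ c_m sin((m−0.5)k_z h). (Stability condition for the balanced SGFD scheme.) -/
import Mathlib


open Real

lemma sum_sin_bound (M : ℕ) (c : Fin M → ℝ) (f : Fin M → ℝ) :
    |∑ m : Fin M, c m * Real.sin (f m)| ≤ ∑ m : Fin M, |c m| := by
  calc |∑ m : Fin M, c m * Real.sin (f m)| ≤ ∑ m : Fin M, |c m * Real.sin (f m)| :=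
        Finset.abs_sum_le_sum_abs _ _
    _ ≤ ∑ m : Fin M, |c m| := by
        apply Finset.sum_le_sum
        intro i _
        rw [abs_mul]
        calc |c i| * |Real.sin (f i)| ≤ |c i| * 1 :=
              mul_le_mul_of_nonneg_left (Real.abs_sin_le_one _) (abs_nonneg _)
          _ = |c i| := mul_one _

theorem balanced_stability (M : ℕ) (c : Fin M → ℝ) (α Δt h : ℝ)
    (hc : 0 < ∑ m : Fin M, |c m|) (hα : 0 < α) (hΔt : 0 < Δt) (hh : 0 < h)
    (hcourant : Δt * α / h ≤ 1 / (Real.sqrt 2 * ∑ m : Fin M, |c m|)) :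
    ∀ kx kz : ℝ,
      (Δt * α / h) ^ 2 *
        ((∑ m : Fin M, c m * Real.sin (((m : ℝ) + 1 - 0.5) * kx * h)) ^ 2 +
         (∑ m : Fin M, c m * Real.sin (((m : ℝ) + 1 - 0.5) * kz * h)) ^ 2) ≤ 1 := by
  intro kx kz
  set S := ∑ m : Fin M, |c m| with hS
  set r := Δt * α / h with hr
  have hr0 : 0 < r := by positivity
  have hX := sum_sin_bound M c (fun m => ((m : ℝ) + 1 - 0.5) * kx * h)
  have hZ := sum_sin_bound M c (fun m => ((m : ℝ) + 1 - 0.5) * kz * h)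
  have hX2 : (∑ m : Fin M, c m * Real.sin (((m : ℝ) + 1 - 0.5) * kx * h)) ^ 2 ≤ S ^ 2 := by
    have := sq_le_sq' (neg_le_of_abs_le hX) (le_of_abs_le hX)
    simpa using this
  have hZ2 : (∑ m : Fin M, c m * Real.sin (((m : ℝ) + 1 - 0.5) * kz * h)) ^ 2 ≤ S ^ 2 := by
    have := sq_le_sq' (neg_le_of_abs_le hZ) (le_of_abs_le hZ)
    simpa using this
  have hr2 : r ^ 2 ≤ 1 / (2 * S ^ 2) := by
    have h1 : r ^ 2 ≤ (1 / (Real.sqrt 2 * S)) ^ 2 :=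
      pow_le_pow_left₀ hr0.le hcourant 2
    have h2 : (1 / (Real.sqrt 2 * S)) ^ 2 = 1 / (2 * S ^ 2) := by
      rw [div_pow, mul_pow, Real.sq_sqrt (by norm_num : (0:ℝ) ≤ 2)]
      norm_num
    linarith
  calc r ^ 2 * ((∑ m : Fin M, c m * Real.sin (((m : ℝ) + 1 - 0.5) * kx * h)) ^ 2 +
         (∑ m : Fin M, c m * Real.sin (((m : ℝ) + 1 - 0.5) * kz * h)) ^ 2)
      ≤ (1 / (2 * S ^ 2)) * (S ^ 2 + S ^ 2) := by
        apply mul_le_mul hr2 (by linarith) (by positivity) (by positivity)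
    _ = 1 := by field_simp; ring
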